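/- Let T be a positive linear map on n × n complex matrices and C ≥ 1 a real such that for every unit vector ψ ∈ ℂⁿ the matrix T(ψψ*) is positive definite with λ_max(T(ψψ*)) ≤ C·λ_min(T(ψψ*)). Then Δ(T) ≤ 2·log C. -/

import Mathlib

/-!
Say that `A` is `C`-pinched if `a ≤ A ≤ C a` in the Loewner order for some `a > 0`. Each
`T(ψψ*)` is `C`-pinched, and a nonzero positive semidefinite `x = ∑ λᵢ ψᵢψᵢ*` is a nonnegative,
not identically zero combination of eigenprojectors, so `T x` is `C`-pinched as well. If
`a ≤ X ≤ C a` and `b ≤ Y ≤ C b`, then `X ≤ (C a / b) Y` and `(a / (C b)) Y ≤ X`, whence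
`sup(X/Y) / inf(X/Y) ≤ C²`.
-/

open Matrix Filter
open scoped ComplexOrder

noncomputable section

/-- The trace norm `‖A‖₁ = Tr √(AᴴA)` of a complex square matrix. -/
def traceNorm {m : Type*} [Fintype m] [DecidableEq m] (A : Matrix m m ℂ) : ℝ :=
  ((Matrix.posSemidef_conjTranspose_mul_self A).1.eigenvectorUnitary.1 *
    diagonal (((↑) : ℝ → ℂ) ∘ Real.sqrt ∘ (Matrix.posSemidef_conjTranspose_mul_self A).1.eigenvalues) *
    (star (Matrix.posSemidef_conjTranspose_mul_self A).1.eigenvectorUnitary : Matrix m m ℂ)).trace.re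

/-- Spectral radius of a map on a complex vector space:
the supremum of the moduli of its eigenvalues. -/
def specRad {M : Type*} [Zero M] [SMul ℂ M] (T : M → M) : ℝ :=
  sSup {r : ℝ | ∃ (c : ℂ) (v : M), v ≠ 0 ∧ T v = c • v ∧ r = ‖c‖}

/-- A linear map on square matrices is positive if it maps positive semidefinite
matrices to positive semidefinite matrices. -/
def IsPosMap {m : Type*} [Fintype m] (T : Matrix m m ℂ →ₗ[ℂ] Matrix m m ℂ) : Prop :=
  ∀ A : Matrix m m ℂ, A.PosSemidef → (T A).PosSemidef

/-- `sup(x/y) = inf {λ ≥ 0 : x ≤ λ y}` (in `[0,∞]`, with the Loewner order). -/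
def supRatio {m : Type*} [Fintype m] (x y : Matrix m m ℂ) : ENNReal :=
  sInf {r : ENNReal | ∃ c : ℝ, 0 ≤ c ∧ r = ENNReal.ofReal c ∧ (c • y - x).PosSemidef}

/-- `inf(x/y) = sup {λ ≥ 0 : λ y ≤ x}` (in `[0,∞]`, with the Loewner order). -/
def infRatio {m : Type*} [Fintype m] (x y : Matrix m m ℂ) : ENNReal :=
  sSup {r : ENNReal | ∃ c : ℝ, 0 ≤ c ∧ r = ENNReal.ofReal c ∧ (x - c • y).PosSemidef}

/-- The Hilbert projective metric `d_H(x,y) = log (sup(x/y) / inf(x/y)) ∈ [0,∞]`. -/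
def dH {m : Type*} [Fintype m] (x y : Matrix m m ℂ) : EReal :=
  ENNReal.log (supRatio x y / infRatio x y)

/-- The projective diameter `Δ(T) = sup { d_H(T x, T y) : x, y PSD nonzero }`. -/
def DeltaT {m : Type*} [Fintype m] (T : Matrix m m ℂ →ₗ[ℂ] Matrix m m ℂ) : EReal :=
  sSup {e : EReal | ∃ x y : Matrix m m ℂ,
    x.PosSemidef ∧ x ≠ 0 ∧ y.PosSemidef ∧ y ≠ 0 ∧ e = dH (T x) (T y)}

end

open scoped MatrixOrder

namespace Matrix

variable {𝕜 ι κ : Type*} [RCLike 𝕜] [Fintype ι] [DecidableEq ι] [Fintype κ] [DecidableEq κ]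

theorem IsHermitian.algebraMap_le_iff_le_eigenvalues {A : Matrix ι ι 𝕜} (hA : A.IsHermitian)
    {r : ℝ} : algebraMap ℝ _ r ≤ A ↔ ∀ i, r ≤ hA.eigenvalues i := by
  rw [algebraMap_le_iff_le_spectrum (p := IsSelfAdjoint) hA,
    hA.spectrum_real_eq_range_eigenvalues, Set.forall_mem_range]

theorem IsHermitian.le_algebraMap_iff_eigenvalues_le {A : Matrix ι ι 𝕜} (hA : A.IsHermitian)
    {r : ℝ} : A ≤ algebraMap ℝ _ r ↔ ∀ i, hA.eigenvalues i ≤ r := by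
  rw [le_algebraMap_iff_spectrum_le (p := IsSelfAdjoint) hA,
    hA.spectrum_real_eq_range_eigenvalues, Set.forall_mem_range]

theorem IsHermitian.eq_sum_eigenvalues_smul_vecMulVec {A : Matrix ι ι 𝕜} (hA : A.IsHermitian) :
    A = ∑ i, hA.eigenvalues i •
      vecMulVec (hA.eigenvectorBasis i : ι → 𝕜) (star (hA.eigenvectorBasis i : ι → 𝕜)) := by
  conv_lhs => rw [hA.spectral_theorem, Unitary.conjStarAlgAut_apply]
  ext j k
  rw [mul_apply, sum_apply]
  refine Finset.sum_congr rfl fun i _ => ?_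
  simp only [mul_diagonal, star_apply, smul_apply, vecMulVec_apply, Pi.star_apply,
    Function.comp_apply, eigenvectorUnitary_apply, RCLike.real_smul_eq_coe_mul]
  ring

theorem IsHermitian.sum_norm_sq_eigenvectorBasis {A : Matrix ι ι 𝕜} (hA : A.IsHermitian)
    (i : ι) : ∑ j, ‖hA.eigenvectorBasis i j‖ ^ 2 = 1 := by
  rw [← EuclideanSpace.norm_sq_eq, hA.eigenvectorBasis.orthonormal.1 i, one_pow]

/-- Equivalently, `A` is positive definite with `λ_max(A) ≤ C λ_min(A)`. -/
def IsPinched (C : ℝ) (A : Matrix ι ι 𝕜) : Prop :=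
  ∃ a > 0, algebraMap ℝ _ a ≤ A ∧ A ≤ algebraMap ℝ _ (C * a)

theorem PosDef.isPinched_of_ciSup_le [Nonempty ι] {B : Matrix ι ι 𝕜} (hB : B.PosDef) {C : ℝ}
    (hC : (⨆ i, hB.1.eigenvalues i) ≤ C * ⨅ i, hB.1.eigenvalues i) : IsPinched C B := by
  obtain ⟨i₀, hi₀⟩ := Finite.exists_min hB.1.eigenvalues
  refine ⟨⨅ i, hB.1.eigenvalues i, (hB.eigenvalues_pos i₀).trans_le (le_ciInf hi₀),
    hB.1.algebraMap_le_iff_le_eigenvalues.2 fun i => ciInf_le (Finite.bddBelow_range _) i,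
    hB.1.le_algebraMap_iff_eigenvalues_le.2 fun i => ?_⟩
  exact (le_ciSup (Finite.bddAbove_range _) i).trans hC

theorem isPinched_map_of_posSemidef (T : Matrix ι ι 𝕜 →ₗ[𝕜] Matrix κ κ 𝕜) {C : ℝ}
    (hT : ∀ ψ : ι → 𝕜, ∑ i, ‖ψ i‖ ^ 2 = 1 → IsPinched C (T (vecMulVec ψ (star ψ))))
    {x : Matrix ι ι 𝕜} (hx : x.PosSemidef) (hx0 : x ≠ 0) : IsPinched C (T x) := by
  set μ := hx.1.eigenvalues
  set ψ : ι → ι → 𝕜 := fun i => hx.1.eigenvectorBasis i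
  choose m hm hlow hupp using fun i => hT (ψ i) (hx.1.sum_norm_sq_eigenvectorBasis i)
  have hTx : T x = ∑ i, μ i • T (vecMulVec (ψ i) (star (ψ i))) := by
    conv_lhs => rw [hx.1.eq_sum_eigenvalues_smul_vecMulVec]
    simp only [map_sum, LinearMap.map_smul_of_tower]
    rfl
  obtain ⟨i₀, hi₀⟩ : ∃ i, μ i ≠ 0 := by
    by_contra! h
    exact hx0 (hx.1.eigenvalues_eq_zero_iff.1 (funext h))
  have hμ : ∀ i, 0 ≤ μ i := hx.eigenvalues_nonneg
  refine ⟨∑ i, μ i * m i, Finset.sum_pos' (fun i _ => mul_nonneg (hμ i) (hm i).le)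
    ⟨i₀, Finset.mem_univ _, mul_pos ((hμ i₀).lt_of_ne' hi₀) (hm i₀)⟩, ?_, ?_⟩
  · rw [hTx, map_sum]
    refine Finset.sum_le_sum fun i _ => ?_
    rw [Algebra.algebraMap_eq_smul_one, mul_smul, ← Algebra.algebraMap_eq_smul_one]
    exact smul_le_smul_of_nonneg_left (hlow i) (hμ i)
  · rw [hTx, Finset.mul_sum, map_sum]
    refine Finset.sum_le_sum fun i _ => ?_
    rw [Algebra.algebraMap_eq_smul_one, mul_left_comm, mul_smul,
      ← Algebra.algebraMap_eq_smul_one]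
    exact smul_le_smul_of_nonneg_left (hupp i) (hμ i)

end Matrix

section HilbertMetric

variable {ι : Type*} [Fintype ι] {x y : Matrix ι ι ℂ}

theorem supRatio_le_ofReal {c : ℝ} (hc : 0 ≤ c) (h : x ≤ c • y) :
    supRatio x y ≤ ENNReal.ofReal c :=
  sInf_le ⟨c, hc, rfl, h⟩

theorem ofReal_le_infRatio {c : ℝ} (hc : 0 ≤ c) (h : c • y ≤ x) :
    ENNReal.ofReal c ≤ infRatio x y :=
  le_sSup ⟨c, hc, rfl, h⟩

theorem dH_le_log_div {p q : ℝ} (hp : 0 < p) (hq : 0 < q) (hxy : x ≤ p • y) (hyx : q • y ≤ x) :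
    dH x y ≤ (Real.log (p / q) : EReal) :=
  calc dH x y ≤ ENNReal.log (ENNReal.ofReal p / ENNReal.ofReal q) :=
        ENNReal.log_monotone <|
          ENNReal.div_le_div (supRatio_le_ofReal hp.le hxy) (ofReal_le_infRatio hq.le hyx)
    _ = Real.log (p / q) := by
        rw [← ENNReal.ofReal_div_of_pos hq, ENNReal.log_ofReal_of_pos (div_pos hp hq)]

theorem dH_le_two_mul_log_of_isPinched [DecidableEq ι] {C : ℝ} (hC : 0 < C) (hx : IsPinched C x)
    (hy : IsPinched C y) : dH x y ≤ ((2 * Real.log C : ℝ) : EReal) := by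
  obtain ⟨a, ha, hax, hxa⟩ := hx
  obtain ⟨b, hb, hby, hyb⟩ := hy
  have hxy : x ≤ (C * a / b) • y :=
    calc x ≤ algebraMap ℝ _ (C * a) := hxa
      _ = (C * a / b) • algebraMap ℝ _ b := by
          rw [Algebra.smul_def, ← map_mul, div_mul_cancel₀ _ hb.ne']
      _ ≤ (C * a / b) • y := smul_le_smul_of_nonneg_left hby (by positivity)
  have hyx : (a / (C * b)) • y ≤ x :=
    calc (a / (C * b)) • y ≤ (a / (C * b)) • algebraMap ℝ _ (C * b) :=
          smul_le_smul_of_nonneg_left hyb (by positivity)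
      _ = algebraMap ℝ _ a := by
          rw [Algebra.smul_def, ← map_mul, div_mul_cancel₀ _ (by positivity)]
      _ ≤ x := hax
  have hratio : C * a / b / (a / (C * b)) = C ^ 2 := by field_simp
  calc dH x y ≤ (Real.log (C * a / b / (a / (C * b))) : EReal) :=
        dH_le_log_div (by positivity) (by positivity) hxy hyx
    _ = ((2 * Real.log C : ℝ) : EReal) := by rw [hratio, Real.log_pow, Nat.cast_ofNat]

end HilbertMetric

theorem stmt8_general (n : ℕ)
    (T : Matrix (Fin n) (Fin n) ℂ →ₗ[ℂ] Matrix (Fin n) (Fin n) ℂ)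
    (C : ℝ) (hC : 1 ≤ C)
    (hprim : ∀ ψ : Fin n → ℂ, (∑ i, ‖ψ i‖ ^ 2 = 1) →
      ∃ hpd : (T (Matrix.vecMulVec ψ (star ψ))).PosDef,
        (⨆ i, hpd.1.eigenvalues i) ≤ C * ⨅ i, hpd.1.eigenvalues i) :
    DeltaT T ≤ ((2 * Real.log C : ℝ) : EReal) := by
  have hpinched : ∀ ψ : Fin n → ℂ, ∑ i, ‖ψ i‖ ^ 2 = 1 →
      IsPinched C (T (vecMulVec ψ (star ψ))) := by
    intro ψ hψ
    have : NeZero n := ⟨by rintro rfl; simp at hψ⟩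
    obtain ⟨hpd, hcond⟩ := hprim ψ hψ
    exact hpd.isPinched_of_ciSup_le hcond
  refine sSup_le ?_
  rintro _ ⟨x, y, hx, hx0, hy, hy0, rfl⟩
  exact dH_le_two_mul_log_of_isPinched (by linarith)
    (isPinched_map_of_posSemidef T hpinched hx hx0) (isPinched_map_of_posSemidef T hpinched hy hy0)

/-- If `T` is a positive linear map on `n × n` matrices and `C ≥ 1` is
such that for every unit vector `ψ` the matrix `T(ψψ*)` is positive definite with
`λ_max(T(ψψ*)) ≤ C λ_min(T(ψψ*))`, then `Δ(T) ≤ 2 log C`. -/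
theorem stmt8 (n : ℕ)
    (T : Matrix (Fin n) (Fin n) ℂ →ₗ[ℂ] Matrix (Fin n) (Fin n) ℂ) (hT : IsPosMap T)
    (C : ℝ) (hC : 1 ≤ C)
    (hprim : ∀ ψ : Fin n → ℂ, (∑ i, ‖ψ i‖ ^ 2 = 1) →
      ∃ hpd : (T (Matrix.vecMulVec ψ (star ψ))).PosDef,
        (⨆ i, hpd.1.eigenvalues i) ≤ C * ⨅ i, hpd.1.eigenvalues i) :
    DeltaT T ≤ ((2 * Real.log C : ℝ) : EReal) :=
  stmt8_general n T C hC hprim
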